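/- arXiv:2212.03910 — 3 statements merged into one kernel-verified Lean document; each statement's English description precedes it below -/
import Mathlib

section
/- Let n ≥ 1 and p ∈ (1, ∞). Let f : ℝⁿ → ℝ be Lipschitz with compact support. Then the limit as t → 0⁺ of t^(−p/2) ∬_{ℝⁿ×ℝⁿ} p_t(x,y) |f(x) − f(y)|^p dx dy exists and equals (2^p/√π) · Γ((p+1)/2) · ∫_{ℝⁿ} ‖Df(x)‖^p dx, where Γ is Euler's gamma function and Df(x) is the Fréchet derivative of f at x (which exists for Lebesgue-a.e. x by Rademacher's theorem; at points of non-differentiability the integrand uses the convention Df(x) = 0). -/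
open MeasureTheory Real Filter

/-- The Gaussian heat kernel on `ℝⁿ`. -/
noncomputable def heatKernel (n : ℕ) (t : ℝ) (x y : EuclideanSpace ℝ (Fin n)) : ℝ :=
  (4 * Real.pi * t) ^ (-(n : ℝ) / 2) * Real.exp (-‖x - y‖ ^ 2 / (4 * t))

/-!
The substitution `y = x + √t z` turns `t^(-p/2) ∬ p_t(x,y) |f x - f y|^p` into
`∬ γ(z) |(f (x + √t z) - f x) / √t|^p`, where `γ = p_1(0, ·)`. By Rademacher's theorem the
difference quotient tends to `Df(x) z` for almost every `x`, and the Lipschitz bound together with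
the compact support gives a Gaussian majorant in `(x, z)`, so dominated convergence applies.
The limit `∫ γ(z) |Df(x) z|^p dz` is computed by rotating `Df(x)` onto a coordinate functional,
after which it factors into one-dimensional Gaussian integrals and equals
`2^p Γ((p+1)/2) / √π · ‖Df(x)‖^p`.
-/

open scoped Topology NNReal RealInnerProductSpace

theorem integral_abs_rpow_mul_exp_neg_sq_div_four {p : ℝ} (hp : -1 < p) :
    ∫ s : ℝ, |s| ^ p * exp (-s ^ 2 / 4) = 2 ^ (p + 1) * Gamma ((p + 1) / 2) := by
  have h : ∀ s : ℝ, |s| ^ p * exp (-s ^ 2 / 4) = |s| ^ p * exp (-(1 / 4) * |s| ^ (2 : ℝ)) :=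
    fun s ↦ by rw [rpow_two, sq_abs]; ring_nf
  simp_rw [h]
  rw [integral_comp_abs (f := fun s ↦ s ^ p * exp (-(1 / 4) * s ^ (2 : ℝ))),
    integral_rpow_mul_exp_neg_mul_rpow two_pos hp (by norm_num),
    show (1 / 4 : ℝ) = 2 ^ (-2 : ℝ) by norm_num [rpow_neg, rpow_two], ← rpow_mul two_pos.le,
    show (-2 : ℝ) * (-(p + 1) / 2) = p + 1 by ring, rpow_add two_pos, rpow_one]
  ring

theorem rpow_mul_exp_neg_sq_le {a b R p : ℝ} (ha : 0 ≤ a) (hb : 0 ≤ b) (hp : 0 ≤ p)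
    (hab : a ≤ R + b) :
    b ^ p * exp (-b ^ 2 / 4) ≤
      exp (4 * p ^ 2 + R ^ 2 / 8) * (exp (-(1 / 16) * a ^ 2) * exp (-(1 / 16) * b ^ 2)) := by
  have hbp : b ^ p ≤ exp (p * b) := by
    rw [mul_comm, exp_mul]
    exact rpow_le_rpow hb ((le_add_of_nonneg_right zero_le_one).trans (add_one_le_exp b)) hp
  calc b ^ p * exp (-b ^ 2 / 4) ≤ exp (p * b) * exp (-b ^ 2 / 4) := by gcongr
    _ = exp (p * b - b ^ 2 / 4) := by rw [← exp_add]; ring_nf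
    _ ≤ exp (4 * p ^ 2 + R ^ 2 / 8 + (-(1 / 16) * a ^ 2 + -(1 / 16) * b ^ 2)) := by
        gcongr
        nlinarith [sq_nonneg (b / 4 - 2 * p), sq_nonneg (R - b), mul_self_le_mul_self ha hab]
    _ = _ := by rw [exp_add, exp_add (-(1 / 16) * a ^ 2)]

theorem integrable_exp_neg_mul_sq_norm {V : Type*} [NormedAddCommGroup V] [InnerProductSpace ℝ V]
    [FiniteDimensional ℝ V] [MeasurableSpace V] [BorelSpace V] {b : ℝ} (hb : 0 < b) :
    Integrable fun v : V ↦ exp (-b * ‖v‖ ^ 2) :=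
  Integrable.of_integral_ne_zero <| by
    rw [GaussianFourier.integral_rexp_neg_mul_sq_norm hb]
    positivity

theorem norm_le_of_sub_ne_zero {E : Type*} [SeminormedAddCommGroup E] {f : E → ℝ} {R : ℝ}
    (hR : ∀ y, f y ≠ 0 → ‖y‖ ≤ R) {x w : E} (h : f (x + w) - f x ≠ 0) : ‖x‖ ≤ R + ‖w‖ := by
  by_cases hx : f x = 0
  · rw [hx, sub_zero] at h
    calc ‖x‖ = ‖x + w - w‖ := by rw [add_sub_cancel_right]
      _ ≤ ‖x + w‖ + ‖w‖ := norm_sub_le _ _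
      _ ≤ R + ‖w‖ := by gcongr; exact hR _ h
  · exact (hR x hx).trans (le_add_of_nonneg_right (norm_nonneg w))

theorem HasFDerivAt.tendsto_sub_div_sqrt {E : Type*} [NormedAddCommGroup E] [NormedSpace ℝ E]
    {f : E → ℝ} {f' : E →L[ℝ] ℝ} {x : E} (hf : HasFDerivAt f f' x) (z : E) :
    Tendsto (fun t ↦ (f (x + √t • z) - f x) / √t) (𝓝[>] 0) (𝓝 (f' z)) := by
  have hsqrt : Tendsto (fun t ↦ √t) (𝓝[>] 0) (𝓝[≠] 0) := by
    refine tendsto_nhdsWithin_of_tendsto_nhds_of_eventually_within _ ?_ ?_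
    · simpa using (continuous_sqrt.tendsto 0).mono_left nhdsWithin_le_nhds
    · filter_upwards [self_mem_nhdsWithin] with t ht using (sqrt_pos.2 ht).ne'
  refine ((hasDerivAt_iff_tendsto_slope.1 (hf.hasLineDerivAt z)).comp hsqrt).congr fun t ↦ ?_
  simp [slope_def_field]

noncomputable def gaussianDensity (ι : Type*) [Fintype ι] (z : EuclideanSpace ℝ ι) : ℝ :=
  (4 * π) ^ (-(Fintype.card ι : ℝ) / 2) * exp (-‖z‖ ^ 2 / 4)

section

variable {ι : Type*} [Fintype ι]

lemma gaussianDensity_nonneg (z : EuclideanSpace ℝ ι) : 0 ≤ gaussianDensity ι z := by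
  unfold gaussianDensity; positivity

lemma gaussianDensity_eq_prod (z : EuclideanSpace ℝ ι) :
    gaussianDensity ι z = ∏ i, (4 * π) ^ (-(1 : ℝ) / 2) * exp (-z i ^ 2 / 4) := by
  rw [Finset.prod_mul_distrib, ← exp_sum, Finset.prod_const, Finset.card_univ,
    ← rpow_natCast, ← rpow_mul (by positivity), gaussianDensity, EuclideanSpace.norm_sq_eq]
  simp only [Real.norm_eq_abs, sq_abs, ← Finset.sum_div, ← Finset.sum_neg_distrib]
  ring_nf

theorem integral_gaussianDensity_mul_abs_apply_rpow (i₀ : ι) {p : ℝ} (hp : -1 < p) :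
    ∫ z, gaussianDensity ι z * |z i₀| ^ p = 2 ^ p * Gamma ((p + 1) / 2) / √π := by
  classical
  set g : ι → ℝ → ℝ := fun i s ↦
    (4 * π) ^ (-(1 : ℝ) / 2) * exp (-s ^ 2 / 4) * if i = i₀ then |s| ^ p else 1
  have hg : ∀ z : EuclideanSpace ℝ ι, gaussianDensity ι z * |z i₀| ^ p = ∏ i, g i (z i) := by
    intro z
    simp only [g, Finset.prod_mul_distrib, Finset.prod_ite_eq', Finset.mem_univ, if_true,
      gaussianDensity_eq_prod]
  have hc : (4 * π) ^ (-(1 : ℝ) / 2) = (2 * √π)⁻¹ := by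
    rw [neg_div, rpow_neg (by positivity), ← sqrt_eq_rpow, sqrt_mul' _ pi_pos.le,
      show √4 = 2 by rw [show (4 : ℝ) = 2 ^ 2 by norm_num, sqrt_sq two_pos.le]]
  have hgi : ∀ i, ∫ s, g i s = if i = i₀ then 2 ^ p * Gamma ((p + 1) / 2) / √π else 1 := by
    intro i
    split_ifs with hi
    · simp only [g, hi, if_true, mul_assoc, integral_const_mul]
      simp_rw [mul_comm (exp _)]
      rw [integral_abs_rpow_mul_exp_neg_sq_div_four hp, hc, rpow_add two_pos, rpow_one]
      field_simp
    · simp only [g, hi, if_false, mul_one, integral_const_mul]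
      have := integral_gaussian (1 / 4)
      simp_rw [show ∀ s : ℝ, -(1 / 4) * s ^ 2 = -s ^ 2 / 4 by intro s; ring] at this
      rw [this, hc, show π / (1 / 4) = 2 ^ 2 * π by ring, sqrt_mul' _ pi_pos.le,
        sqrt_sq two_pos.le]
      field_simp
  calc ∫ z, gaussianDensity ι z * |z i₀| ^ p
      = ∫ w : ι → ℝ, ∏ i, g i (w i) := by
        simp_rw [hg]
        exact ((EuclideanSpace.volume_preserving_symm_measurableEquiv_toLp ι).symm.integral_comp
          (MeasurableEquiv.measurableEmbedding _) _).symm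
    _ = ∏ i, ∫ s, g i s := integral_fintype_prod_eq_prod g
    _ = 2 ^ p * Gamma ((p + 1) / 2) / √π := by
        simp only [hgi, Finset.prod_ite_eq', Finset.mem_univ, if_true]

theorem integral_gaussianDensity_mul_abs_inner_rpow {u : EuclideanSpace ℝ ι} (hu : ‖u‖ = 1)
    {p : ℝ} (hp : -1 < p) :
    ∫ z, gaussianDensity ι z * |⟪u, z⟫| ^ p = 2 ^ p * Gamma ((p + 1) / 2) / √π := by
  classical
  obtain ⟨i₀⟩ : Nonempty ι := by
    by_contra h
    rw [not_nonempty_iff] at h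
    simp [Subsingleton.elim u 0] at hu
  set e := EuclideanSpace.single i₀ (1 : ℝ)
  set Q := Submodule.reflection (ℝ ∙ (u - e))ᗮ
  have hQu : Q u = e := Submodule.reflection_sub (by simp [e, hu])
  have hinner : ∀ w, ⟪u, Q w⟫ = w i₀ := fun w ↦ by
    rw [← Q.inner_map_map, hQu, Submodule.reflection_reflection, EuclideanSpace.inner_single_left]
    simp
  rw [← Q.measurePreserving.integral_comp Q.toHomeomorph.measurableEmbedding]
  simp_rw [hinner]
  simp only [gaussianDensity, LinearIsometryEquiv.norm_map]
  exact integral_gaussianDensity_mul_abs_apply_rpow i₀ hp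

theorem integral_gaussianDensity_mul_abs_rpow_clm {p : ℝ} (hp : 0 < p)
    (L : EuclideanSpace ℝ ι →L[ℝ] ℝ) :
    ∫ z, gaussianDensity ι z * |L z| ^ p = 2 ^ p / √π * Gamma ((p + 1) / 2) * ‖L‖ ^ p := by
  rcases eq_or_ne L 0 with rfl | hL
  · simp [zero_rpow hp.ne']
  set v := (InnerProductSpace.toDual ℝ _).symm L
  have hv : ‖v‖ = ‖L‖ := LinearIsometryEquiv.norm_map _ L
  have hL' : 0 < ‖L‖ := norm_pos_iff.2 hL
  have hLz : ∀ z, |L z| ^ p = ‖L‖ ^ p * |⟪‖L‖⁻¹ • v, z⟫| ^ p := fun z ↦ by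
    rw [real_inner_smul_left, InnerProductSpace.toDual_symm_apply, abs_mul, abs_inv, abs_norm,
      mul_rpow (by positivity) (abs_nonneg _), ← mul_assoc, ← mul_rpow hL'.le (by positivity),
      mul_inv_cancel₀ hL'.ne', one_rpow, one_mul]
  simp_rw [hLz, mul_left_comm _ (‖L‖ ^ p), integral_const_mul]
  rw [integral_gaussianDensity_mul_abs_inner_rpow (by rw [norm_smul, norm_inv, norm_norm, hv,
    inv_mul_cancel₀ hL'.ne']) (by linarith)]
  ring

theorem heatKernel_add_sqrt_smul {n : ℕ} {t : ℝ} (ht : 0 < t) (x z : EuclideanSpace ℝ (Fin n)) :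
    heatKernel n t x (x + √t • z) = (√t ^ n)⁻¹ * gaussianDensity (Fin n) z := by
  have hnorm : ‖x - (x + √t • z)‖ ^ 2 = t * ‖z‖ ^ 2 := by
    rw [sub_add_cancel_left, norm_neg, norm_smul, mul_pow, norm_of_nonneg (sqrt_nonneg t),
      sq_sqrt ht.le]
  have hpow : t ^ (-(n : ℝ) / 2) = (√t ^ n)⁻¹ := by
    rw [sqrt_eq_rpow, ← rpow_natCast, ← rpow_mul ht.le, ← rpow_neg ht.le]
    ring_nf
  rw [heatKernel, gaussianDensity, hnorm, Fintype.card_fin, mul_rpow (by positivity) ht.le, hpow,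
    show -(t * ‖z‖ ^ 2) / (4 * t) = -‖z‖ ^ 2 / 4 by field_simp]
  ring

theorem integral_heatKernel_mul {n : ℕ} {t : ℝ} (ht : 0 < t) (x : EuclideanSpace ℝ (Fin n))
    (F : EuclideanSpace ℝ (Fin n) → ℝ) :
    ∫ y, heatKernel n t x y * F y = ∫ z, gaussianDensity (Fin n) z * F (x + √t • z) := by
  have hscale := Measure.integral_comp_smul_of_nonneg volume
    (fun w ↦ heatKernel n t x (x + w) * F (x + w)) √t (hR := sqrt_nonneg t)
  rw [finrank_euclideanSpace_fin, integral_add_left_eq_self (fun y ↦ heatKernel n t x y * F y) x,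
    eq_inv_smul_iff₀ (by positivity)] at hscale
  rw [← hscale, smul_eq_mul, ← integral_const_mul]
  simp_rw [heatKernel_add_sqrt_smul ht, ← mul_assoc, mul_inv_cancel₀ (by positivity : √t ^ n ≠ 0),
    one_mul]

noncomputable def incrementIntegrand (f : EuclideanSpace ℝ ι → ℝ) (p t : ℝ)
    (q : EuclideanSpace ℝ ι × EuclideanSpace ℝ ι) : ℝ :=
  gaussianDensity ι q.2 * |(f (q.1 + √t • q.2) - f q.1) / √t| ^ p

noncomputable def derivIntegrand (f : EuclideanSpace ℝ ι → ℝ) (p : ℝ)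
    (q : EuclideanSpace ℝ ι × EuclideanSpace ℝ ι) : ℝ :=
  gaussianDensity ι q.2 * |fderiv ℝ f q.1 q.2| ^ p

theorem rpow_neg_half_mul_integral_heatKernel {n : ℕ} (p : ℝ) {t : ℝ} (ht : 0 < t)
    (f : EuclideanSpace ℝ (Fin n) → ℝ) :
    t ^ (-(p / 2)) * ∫ x, ∫ y, heatKernel n t x y * |f x - f y| ^ p =
      ∫ x, ∫ z, incrementIntegrand f p t (x, z) := by
  rw [← integral_const_mul]
  refine integral_congr_ae (.of_forall fun x ↦ ?_)
  dsimp only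
  rw [integral_heatKernel_mul ht, ← integral_const_mul]
  refine integral_congr_ae (.of_forall fun z ↦ ?_)
  dsimp only
  have hquot :
      |(f (x + √t • z) - f x) / √t| ^ p = t ^ (-(p / 2)) * |f x - f (x + √t • z)| ^ p := by
    rw [abs_div, abs_of_nonneg (sqrt_nonneg t), abs_sub_comm,
      div_rpow (abs_nonneg _) (sqrt_nonneg t), sqrt_eq_rpow, ← rpow_mul ht.le, rpow_neg ht.le,
      div_eq_inv_mul]
    ring_nf
  simp only [incrementIntegrand, hquot]
  ring

noncomputable def gaussianMajorant (ι : Type*) [Fintype ι] (C R p : ℝ)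
    (q : EuclideanSpace ℝ ι × EuclideanSpace ℝ ι) : ℝ :=
  (4 * π) ^ (-(Fintype.card ι : ℝ) / 2) * C ^ p * exp (4 * p ^ 2 + R ^ 2 / 8) *
    (exp (-(1 / 16) * ‖q.1‖ ^ 2) * exp (-(1 / 16) * ‖q.2‖ ^ 2))

theorem integrable_gaussianMajorant (C R p : ℝ) :
    Integrable (gaussianMajorant ι C R p) (volume.prod volume) :=
  ((integrable_exp_neg_mul_sq_norm (by norm_num)).mul_prod
    (integrable_exp_neg_mul_sq_norm (by norm_num))).const_mul _

theorem gaussianDensity_mul_abs_rpow_le {x z : EuclideanSpace ℝ ι} {v C R p : ℝ} (hC : 0 ≤ C)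
    (hp : 0 < p) (hv : |v| ≤ C * ‖z‖) (hx : v ≠ 0 → ‖x‖ ≤ R + ‖z‖) :
    gaussianDensity ι z * |v| ^ p ≤ gaussianMajorant ι C R p (x, z) := by
  rcases eq_or_ne v 0 with rfl | hv0
  · rw [abs_zero, zero_rpow hp.ne', mul_zero, gaussianMajorant]
    positivity
  calc gaussianDensity ι z * |v| ^ p
      ≤ gaussianDensity ι z * (C ^ p * ‖z‖ ^ p) := by
        rw [← mul_rpow hC (norm_nonneg z)]
        gcongr
        exact gaussianDensity_nonneg z
    _ = (4 * π) ^ (-(Fintype.card ι : ℝ) / 2) * C ^ p * (‖z‖ ^ p * exp (-‖z‖ ^ 2 / 4)) := by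
        rw [gaussianDensity]; ring
    _ ≤ gaussianMajorant ι C R p (x, z) := by
        rw [gaussianMajorant, mul_assoc (_ * C ^ p)]
        exact mul_le_mul_of_nonneg_left
          (rpow_mul_exp_neg_sq_le (norm_nonneg x) (norm_nonneg z) hp.le (hx hv0)) (by positivity)

variable {f : EuclideanSpace ℝ ι → ℝ} {C : ℝ≥0} {R p : ℝ}

theorem incrementIntegrand_le (hf : LipschitzWith C f)
    (hR : tsupport f ⊆ Metric.closedBall 0 R) (hp : 0 < p) {t : ℝ} (ht : t ∈ Set.Ioc 0 1)
    (q : EuclideanSpace ℝ ι × EuclideanSpace ℝ ι) :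
    ‖incrementIntegrand f p t q‖ ≤ gaussianMajorant ι C R p q := by
  obtain ⟨x, z⟩ := q
  rw [incrementIntegrand, norm_of_nonneg (mul_nonneg (gaussianDensity_nonneg z) (by positivity))]
  have hsqrt : 0 < √t := sqrt_pos.2 ht.1
  have hsz : ‖√t • z‖ ≤ ‖z‖ := by
    rw [norm_smul, norm_of_nonneg hsqrt.le]
    exact mul_le_of_le_one_left (norm_nonneg z) (sqrt_le_one.2 ht.2)
  refine gaussianDensity_mul_abs_rpow_le C.2 hp ?_ fun h ↦ ?_
  · calc |(f (x + √t • z) - f x) / √t| ≤ C * ‖√t • z‖ / √t := by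
          rw [abs_div, abs_of_pos hsqrt]
          gcongr
          simpa [Real.dist_eq, dist_eq_norm] using hf.dist_le_mul (x + √t • z) x
      _ = C * ‖z‖ := by rw [norm_smul, norm_of_nonneg hsqrt.le]; field_simp
  · have hR' : ∀ y, f y ≠ 0 → ‖y‖ ≤ R := fun y hy ↦
      mem_closedBall_zero_iff.1 (hR (subset_tsupport f hy))
    exact (norm_le_of_sub_ne_zero hR' (div_ne_zero_iff.1 h).1).trans (by gcongr)

theorem derivIntegrand_le (hf : LipschitzWith C f) (hR : tsupport f ⊆ Metric.closedBall 0 R)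
    (hp : 0 < p) (q : EuclideanSpace ℝ ι × EuclideanSpace ℝ ι) :
    ‖derivIntegrand f p q‖ ≤ gaussianMajorant ι C R p q := by
  obtain ⟨x, z⟩ := q
  rw [derivIntegrand, norm_of_nonneg (mul_nonneg (gaussianDensity_nonneg z) (by positivity))]
  refine gaussianDensity_mul_abs_rpow_le C.2 hp ?_ fun h ↦ ?_
  · exact ((fderiv ℝ f x).le_opNorm z).trans
      (mul_le_mul_of_nonneg_right (norm_fderiv_le_of_lipschitz ℝ hf) (norm_nonneg z))
  · have hx : x ∈ tsupport f := by
      by_contra hx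
      simp [fderiv_of_notMem_tsupport ℝ hx] at h
    exact (mem_closedBall_zero_iff.1 (hR hx)).trans (le_add_of_nonneg_right (norm_nonneg z))

theorem tendsto_integral_incrementIntegrand (hf : LipschitzWith C f) (hsupp : HasCompactSupport f)
    (hp : 0 < p) :
    Tendsto (fun t ↦ ∫ x, ∫ z, incrementIntegrand f p t (x, z)) (𝓝[>] 0)
      (𝓝 (∫ x, ∫ z, derivIntegrand f p (x, z))) := by
  obtain ⟨R, -, hR⟩ := hsupp.isBounded.subset_closedBall_lt 0 0
  have hIoc : Set.Ioc (0 : ℝ) 1 ∈ 𝓝[>] 0 := Ioc_mem_nhdsGT one_pos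
  have hrpow : Continuous fun a : ℝ ↦ |a| ^ p := continuous_abs.rpow_const fun _ ↦ Or.inr hp.le
  have hdens : Continuous (gaussianDensity ι) := by unfold gaussianDensity; fun_prop
  have hincr_meas : ∀ t, AEStronglyMeasurable (incrementIntegrand f p t) (volume.prod volume) := by
    have := hf.continuous
    exact fun t ↦ ((hdens.comp continuous_snd).mul (hrpow.comp (by fun_prop))).aestronglyMeasurable
  have hderiv_meas : AEStronglyMeasurable (derivIntegrand f p) (volume.prod volume) := by
    have happly := ContinuousLinearMap.measurable_apply₂.comp
      (((measurable_fderiv ℝ f).comp measurable_fst).prodMk measurable_snd)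
    exact ((hdens.comp continuous_snd).measurable.mul
      (hrpow.measurable.comp happly)).aestronglyMeasurable
  have hG := integrable_gaussianMajorant (ι := ι) C R p
  have hincr_int : ∀ t ∈ Set.Ioc (0 : ℝ) 1,
      Integrable (incrementIntegrand f p t) (volume.prod volume) := fun t ht ↦
    hG.mono' (hincr_meas t) (.of_forall (incrementIntegrand_le hf hR hp ht))
  have hderiv_int : Integrable (derivIntegrand f p) (volume.prod volume) :=
    hG.mono' hderiv_meas (.of_forall (derivIntegrand_le hf hR hp))
  have hlim : ∀ᵐ q ∂(volume.prod volume),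
      Tendsto (fun t ↦ incrementIntegrand f p t q) (𝓝[>] 0) (𝓝 (derivIntegrand f p q)) := by
    filter_upwards [Measure.quasiMeasurePreserving_fst.ae hf.ae_differentiableAt] with q hq
    exact ((hrpow.tendsto _).comp (hq.hasFDerivAt.tendsto_sub_div_sqrt q.2)).const_mul _
  have hdct := tendsto_integral_filter_of_dominated_convergence _ (.of_forall hincr_meas)
    (eventually_of_mem hIoc fun t ht ↦ .of_forall (incrementIntegrand_le hf hR hp ht)) hG hlim
  rw [integral_prod _ hderiv_int] at hdct
  refine hdct.congr' ?_
  filter_upwards [hIoc] with t ht using integral_prod _ (hincr_int t ht)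

end

theorem stmt_0_general (n : ℕ) (p : ℝ) (hp : 1 < p)
    (f : EuclideanSpace ℝ (Fin n) → ℝ)
    (hf : ∃ C : NNReal, LipschitzWith C f) (hsupp : HasCompactSupport f) :
    Tendsto (fun t : ℝ =>
        t ^ (-(p / 2)) * ∫ x, ∫ y, heatKernel n t x y * |f x - f y| ^ p)
      (nhdsWithin 0 (Set.Ioi 0))
      (nhds ((2 ^ p / Real.sqrt Real.pi) * Real.Gamma ((p + 1) / 2) *
        ∫ x, ‖fderiv ℝ f x‖ ^ p)) := by
  obtain ⟨C, hC⟩ := hf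
  have hp0 : 0 < p := by linarith
  have hlim := tendsto_integral_incrementIntegrand hC hsupp hp0
  simp_rw [derivIntegrand, integral_gaussianDensity_mul_abs_rpow_clm hp0, integral_const_mul]
    at hlim
  refine hlim.congr' ?_
  filter_upwards [self_mem_nhdsWithin] with t ht
  exact (rpow_neg_half_mul_integral_heatKernel p ht f).symm

/-- Euclidean Lipschitz case of the heat-kernel characterization of the Cheeger `p`-energy. -/
theorem stmt_0 (n : ℕ) (hn : 1 ≤ n) (p : ℝ) (hp : 1 < p)
    (f : EuclideanSpace ℝ (Fin n) → ℝ)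
    (hf : ∃ C : NNReal, LipschitzWith C f) (hsupp : HasCompactSupport f) :
    Tendsto (fun t : ℝ =>
        t ^ (-(p / 2)) * ∫ x, ∫ y, heatKernel n t x y * |f x - f y| ^ p)
      (nhdsWithin 0 (Set.Ioi 0))
      (nhds ((2 ^ p / Real.sqrt Real.pi) * Real.Gamma ((p + 1) / 2) *
        ∫ x, ‖fderiv ℝ f x‖ ^ p)) :=
  stmt_0_general n p hp f hf hsupp
end

section
/- Let n ≥ 1, t > 0, and let H = {z ∈ ℝⁿ : zₙ > 0} be the open upper half-space. Then the function u : ℝⁿ → ℝ defined by u(x) = ∫_H (4πt)^(−n/2) exp(−‖x−z‖²/(4t)) dz is differentiable at every x ∈ ℝⁿ with gradient ∇u(x) = (4πt)^(−1/2) exp(−xₙ²/(4t)) · eₙ, where eₙ is the n-th standard basis vector and xₙ is the n-th coordinate of x; in particular ‖∇u(x)‖ = (4πt)^(−1/2) exp(−xₙ²/(4t)). -/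
open MeasureTheory Real Filter

/-!
The heat kernel on `ℝⁿ` is the product of the one-dimensional heat kernels in the coordinates,
so by Fubini its integral over the half-space `{z | 0 < z i₀}` is the product of the integrals
over `ℝ` in the coordinates `i ≠ i₀`, each equal to `1`, and the integral over `(0, ∞)` in the
coordinate `i₀`. After the reflection `w ↦ x i₀ - w` this leaves
`u x = (4πt)^(-1/2) ∫_{-∞}^{x i₀} exp (-w² / 4t) dw`, a function of `x i₀` alone whose derivative
is given by the fundamental theorem of calculus.
-/

theorem hasDerivAt_setIntegral_Iio {E : Type*} [NormedAddCommGroup E] [NormedSpace ℝ E]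
    [CompleteSpace E] {g : ℝ → E} {s : ℝ} (hg : Integrable g) (hgs : ContinuousAt g s) :
    HasDerivAt (fun s => ∫ w in Set.Iio s, g w) (g s) s := by
  have hsplit : (fun s => ∫ w in Set.Iio s, g w)
      = fun s => (∫ w in Set.Iic 0, g w) + ∫ w in (0 : ℝ)..s, g w := by
    funext s
    rw [← integral_Iic_eq_integral_Iio,
      ← intervalIntegral.integral_Iic_sub_Iic hg.integrableOn hg.integrableOn, add_sub_cancel]
  rw [hsplit]
  exact (intervalIntegral.integral_hasDerivAt_right hg.intervalIntegrable
    hg.aestronglyMeasurable.stronglyMeasurableAtFilter hgs).const_add _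

theorem setIntegral_Ioi_comp_sub_left {E : Type*} [NormedAddCommGroup E] [NormedSpace ℝ E]
    (g : ℝ → E) (a : ℝ) : ∫ w in Set.Ioi 0, g (a - w) = ∫ w in Set.Iio a, g w := by
  have hpre : (fun w : ℝ => a - w) ⁻¹' Set.Iio a = Set.Ioi 0 := by
    ext w; simp
  rw [← hpre]
  exact (Measure.measurePreserving_sub_left volume a).setIntegral_preimage_emb
    (measurableEmbedding_subLeft a) g _

-- For `c ≤ 0` both sides vanish, by the junk values of `∫` and `√`.
theorem integral_exp_neg_sub_sq_div (c a : ℝ) :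
    ∫ w, exp (-(a - w) ^ 2 / c) = √(π * c) := by
  rw [integral_sub_left_eq_self (fun v => exp (-v ^ 2 / c)) volume a]
  have hquad : ∀ v : ℝ, -v ^ 2 / c = -c⁻¹ * v ^ 2 := fun v => by ring
  simp_rw [hquad, integral_gaussian, div_inv_eq_mul]

section EuclideanSpace

variable {ι : Type*} [Fintype ι]

theorem EuclideanSpace.integral_prod {𝕜 : Type*} [RCLike 𝕜] (f : ι → ℝ → 𝕜) :
    ∫ z : EuclideanSpace ℝ ι, ∏ i, f i (z i) = ∏ i, ∫ w, f i w := by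
  rw [← (PiLp.volume_preserving_toLp ι).integral_comp
    (MeasurableEquiv.toLp 2 _).measurableEmbedding]
  exact integral_fintype_prod_volume_eq_prod f

theorem EuclideanSpace.setIntegral_prod_of_apply_mem {𝕜 : Type*} [RCLike 𝕜] [DecidableEq ι]
    (f : ι → ℝ → 𝕜) (i₀ : ι) {s : Set ℝ} (hs : MeasurableSet s) :
    ∫ z in {z : EuclideanSpace ℝ ι | z i₀ ∈ s}, ∏ i, f i (z i)
      = (∫ w in s, f i₀ w) * ∏ i ∈ Finset.univ.erase i₀, ∫ w, f i w := by
  have hindicator : ∀ z : EuclideanSpace ℝ ι,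
      {z : EuclideanSpace ℝ ι | z i₀ ∈ s}.indicator (fun z => ∏ i, f i (z i)) z
        = ∏ i, Function.update f i₀ (s.indicator (f i₀)) i (z i) := by
    intro z
    by_cases hz : z i₀ ∈ s
    · rw [Set.indicator_of_mem (show z ∈ {z : EuclideanSpace ℝ ι | z i₀ ∈ s} from hz)]
      refine Finset.prod_congr rfl fun i _ => ?_
      rcases eq_or_ne i i₀ with rfl | hi
      · simp [Set.indicator_of_mem hz]
      · simp [hi]
    · rw [Set.indicator_of_notMem (show z ∉ {z : EuclideanSpace ℝ ι | z i₀ ∈ s} from hz), eq_comm]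
      exact Finset.prod_eq_zero (Finset.mem_univ i₀) (by simp [Set.indicator_of_notMem hz])
  have hmeas : MeasurableSet {z : EuclideanSpace ℝ ι | z i₀ ∈ s} :=
    (EuclideanSpace.proj (𝕜 := ℝ) i₀).continuous.measurable hs
  rw [← integral_indicator hmeas, integral_congr_ae (Eventually.of_forall hindicator),
    EuclideanSpace.integral_prod, Finset.prod_congr rfl fun i _ =>
      Function.apply_update (fun _ (g : ℝ → 𝕜) => ∫ w, g w) f i₀ _ i,
    Finset.prod_update_of_mem (Finset.mem_univ i₀), integral_indicator hs,
    Finset.sdiff_singleton_eq_erase]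

theorem EuclideanSpace.exp_neg_norm_sub_sq_div_eq_prod (x z : EuclideanSpace ℝ ι) (c : ℝ) :
    exp (-‖x - z‖ ^ 2 / c) = ∏ i, exp (-(x i - z i) ^ 2 / c) := by
  rw [← exp_sum, EuclideanSpace.norm_eq, sq_sqrt (by positivity), ← Finset.sum_div,
    ← Finset.sum_neg_distrib]
  simp

theorem setIntegral_halfSpace_heatKernel {t : ℝ} (ht : 0 < t)
    (x : EuclideanSpace ℝ ι) (i₀ : ι) :
    ∫ z in {z : EuclideanSpace ℝ ι | 0 < z i₀},
        (4 * π * t) ^ (-(Fintype.card ι : ℝ) / 2) * exp (-‖x - z‖ ^ 2 / (4 * t))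
      = (4 * π * t) ^ (-(1 : ℝ) / 2) * ∫ w in Set.Iio (x i₀), exp (-w ^ 2 / (4 * t)) := by
  classical
  have h4πt : 0 < 4 * π * t := by positivity
  set k : ι → ℝ → ℝ := fun i w => (4 * π * t) ^ (-(1 : ℝ) / 2) * exp (-(x i - w) ^ 2 / (4 * t))
    with hk
  have hfactor : ∀ z : EuclideanSpace ℝ ι,
      (4 * π * t) ^ (-(Fintype.card ι : ℝ) / 2) * exp (-‖x - z‖ ^ 2 / (4 * t))
        = ∏ i, k i (z i) := by
    intro z
    rw [hk, Finset.prod_mul_distrib, Finset.prod_const, Finset.card_univ,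
      ← EuclideanSpace.exp_neg_norm_sub_sq_div_eq_prod,
      ← rpow_natCast ((4 * π * t) ^ (-(1 : ℝ) / 2)), ← rpow_mul h4πt.le]
    ring_nf
  have hnormalized : ∀ i, ∫ w, k i w = 1 := by
    intro i
    rw [hk, integral_const_mul, integral_exp_neg_sub_sq_div,
      show π * (4 * t) = 4 * π * t by ring, sqrt_eq_rpow, ← rpow_add h4πt]
    norm_num
  simp_rw [hfactor]
  rw [show {z : EuclideanSpace ℝ ι | 0 < z i₀} = {z | z i₀ ∈ Set.Ioi 0} from rfl,
    EuclideanSpace.setIntegral_prod_of_apply_mem _ i₀ measurableSet_Ioi]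
  simp only [hnormalized, Finset.prod_const_one, mul_one]
  rw [hk, integral_const_mul, setIntegral_Ioi_comp_sub_left (fun w => exp (-w ^ 2 / (4 * t)))]

theorem HasDerivAt.hasGradientAt_comp_apply [DecidableEq ι] {g : ℝ → ℝ} {g' : ℝ}
    {x : EuclideanSpace ℝ ι} (i : ι) (hg : HasDerivAt g g' (x i)) :
    HasGradientAt (fun y : EuclideanSpace ℝ ι => g (y i)) (g' • EuclideanSpace.single i 1) x := by
  have hdual : InnerProductSpace.toDual ℝ (EuclideanSpace ℝ ι) (g' • EuclideanSpace.single i 1)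
      = g' • EuclideanSpace.proj i := by
    ext y
    simp [EuclideanSpace.inner_single_left]
  rw [hasGradientAt_iff_hasFDerivAt, hdual]
  exact hg.comp_hasFDerivAt x (EuclideanSpace.proj (𝕜 := ℝ) i).hasFDerivAt

end EuclideanSpace

/-- Explicit gradient of the heat semigroup applied to the characteristic function of the
upper half-space `H = {z : zₙ > 0}` in `ℝⁿ`. -/
theorem stmt_12 (n : ℕ) (hn : 1 ≤ n) (t : ℝ) (ht : 0 < t) :
    ∀ x : EuclideanSpace ℝ (Fin n),
      HasGradientAt
        (fun x : EuclideanSpace ℝ (Fin n) =>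
          ∫ z in {z : EuclideanSpace ℝ (Fin n) | 0 < z ⟨n - 1, by omega⟩},
            (4 * Real.pi * t) ^ (-(n : ℝ) / 2) * Real.exp (-‖x - z‖ ^ 2 / (4 * t)))
        (((4 * Real.pi * t) ^ (-(1 : ℝ) / 2) *
            Real.exp (-(x ⟨n - 1, by omega⟩) ^ 2 / (4 * t))) •
          EuclideanSpace.single (⟨n - 1, by omega⟩ : Fin n) (1 : ℝ)) x ∧
      ‖(((4 * Real.pi * t) ^ (-(1 : ℝ) / 2) *
            Real.exp (-(x ⟨n - 1, by omega⟩) ^ 2 / (4 * t))) •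
          EuclideanSpace.single (⟨n - 1, by omega⟩ : Fin n) (1 : ℝ))‖
        = (4 * Real.pi * t) ^ (-(1 : ℝ) / 2) *
            Real.exp (-(x ⟨n - 1, by omega⟩) ^ 2 / (4 * t)) := by
  intro x
  set i₀ : Fin n := ⟨n - 1, by omega⟩
  have hu := fun x => setIntegral_halfSpace_heatKernel ht x i₀
  simp only [Fintype.card_fin] at hu
  have hgauss : Integrable fun w : ℝ => exp (-w ^ 2 / (4 * t)) := by
    simpa [neg_div, div_eq_inv_mul] using
      integrable_exp_neg_mul_sq (b := (4 * t)⁻¹) (by positivity)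
  constructor
  · simp only [hu]
    exact ((hasDerivAt_setIntegral_Iio hgauss (by fun_prop)).const_mul _).hasGradientAt_comp_apply
      i₀
  · rw [norm_smul, PiLp.norm_single, norm_one, mul_one, Real.norm_of_nonneg (by positivity)]
end

section
/- Let n ≥ 1, p ∈ (1, ∞), L ≥ 0, and let K ⊆ ℝⁿ be measurable with finite Lebesgue measure λ(K). Let f : ℝⁿ → ℝ be Lipschitz with constant L and satisfy f(x) = 0 for all x ∉ K. Then for every t > 0, t^(−p/2) ∬_{ℝⁿ×ℝⁿ} p_t(x,y) |f(x) − f(y)|^p dx dy ≤ 2^(p+1) · L^p · λ(K) · Γ((n+p)/2) / Γ(n/2), where Γ is Euler's gamma function. -/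
/-!
Since `f` is `L`-Lipschitz and vanishes off `K`,
`|f x - f y| ^ p ≤ L ^ p ‖x - y‖ ^ p (𝟙_K x + 𝟙_K y)`. The kernel depends only on `x - y`, so by
translation invariance each indicator term contributes `λ(K)` times the `p`-th moment
`∫ p_t(z, 0) ‖z‖ ^ p dz = (4t) ^ (p/2) Γ((n+p)/2) / Γ(n/2)`, computed in polar coordinates;
finally `(4t) ^ (p/2) = 2 ^ p t ^ (p/2)` cancels the rescaling.
-/

open MeasureTheory Real Filter
open scoped ENNReal

lemma pow_smul_rpow_mul_exp_neg_mul_sq_eqOn {d : ℕ} (hd : 1 ≤ d) (b q : ℝ) :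
    Set.EqOn (fun r : ℝ => r ^ (d - 1) • (r ^ q * exp (-b * r ^ 2)))
      (fun r => r ^ ((d : ℝ) - 1 + q) * exp (-b * r ^ (2 : ℝ))) (Set.Ioi 0) := by
  intro r (hr : 0 < r)
  simp only [smul_eq_mul, Real.rpow_add hr, Real.rpow_two]
  rw [← Real.rpow_natCast, Nat.cast_sub hd, Nat.cast_one]
  ring

section GaussianMoment

variable {E : Type*} [NormedAddCommGroup E] [InnerProductSpace ℝ E] [FiniteDimensional ℝ E]
  [MeasurableSpace E] [BorelSpace E] [Nontrivial E]

open Module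

theorem integrable_norm_rpow_mul_exp_neg_mul_sq {b q : ℝ} (hb : 0 < b)
    (hq : -(finrank ℝ E : ℝ) < q) :
    Integrable fun z : E => ‖z‖ ^ q * exp (-b * ‖z‖ ^ 2) := by
  rw [integrable_fun_norm_addHaar volume (f := fun r => r ^ q * exp (-b * r ^ 2))]
  refine IntegrableOn.congr_fun ?_ (pow_smul_rpow_mul_exp_neg_mul_sq_eqOn finrank_pos b q).symm
    measurableSet_Ioi
  exact integrableOn_rpow_mul_exp_neg_mul_rpow (by linarith) two_pos hb

theorem integral_norm_rpow_mul_exp_neg_mul_sq {b q : ℝ} (hb : 0 < b)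
    (hq : -(finrank ℝ E : ℝ) < q) :
    ∫ z : E, ‖z‖ ^ q * exp (-b * ‖z‖ ^ 2) = π ^ ((finrank ℝ E : ℝ) / 2) *
      b ^ (-((finrank ℝ E : ℝ) + q) / 2) * Gamma (((finrank ℝ E : ℝ) + q) / 2) /
        Gamma ((finrank ℝ E : ℝ) / 2) := by
  have hd : (0 : ℝ) < finrank ℝ E := by exact_mod_cast finrank_pos
  have hball : volume.real (Metric.ball (0 : E) 1) =
      π ^ ((finrank ℝ E : ℝ) / 2) / Gamma ((finrank ℝ E : ℝ) / 2 + 1) := by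
    rw [measureReal_def, InnerProductSpace.volume_ball, ENNReal.ofReal_one, one_pow, one_mul,
      ENNReal.toReal_ofReal (by positivity), Real.sqrt_eq_rpow, ← Real.rpow_natCast,
      ← Real.rpow_mul pi_pos.le]
    ring_nf
  have hradial : ∫ r in Set.Ioi (0 : ℝ), r ^ (finrank ℝ E - 1) • (r ^ q * exp (-b * r ^ 2)) =
      b ^ (-((finrank ℝ E : ℝ) + q) / 2) * (1 / 2) * Gamma (((finrank ℝ E : ℝ) + q) / 2) := by
    rw [setIntegral_congr_fun measurableSet_Ioi
      (pow_smul_rpow_mul_exp_neg_mul_sq_eqOn finrank_pos b q),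
      integral_rpow_mul_exp_neg_mul_rpow two_pos (by linarith) hb]
    ring_nf
  rw [integral_fun_norm_addHaar volume (fun r => r ^ q * exp (-b * r ^ 2)), hradial, hball,
    nsmul_eq_mul, smul_eq_mul, Real.Gamma_add_one (by positivity)]
  field_simp

end GaussianMoment

theorem lintegral_lintegral_sub_mul_indicator_add_indicator {G : Type*} [MeasurableSpace G]
    [AddCommGroup G] [MeasurableAdd₂ G] [MeasurableNeg G] (μ : Measure G) [SFinite μ]
    [μ.IsAddLeftInvariant] [μ.IsNegInvariant] {g : G → ℝ≥0∞} (hg : Measurable g) {K : Set G}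
    (hK : MeasurableSet K) :
    ∫⁻ x, ∫⁻ y, g (x - y) * (K.indicator 1 x + K.indicator 1 y) ∂μ ∂μ =
      2 * μ K * ∫⁻ z, g z ∂μ := by
  have hind : Measurable (K.indicator (1 : G → ℝ≥0∞)) := measurable_const.indicator hK
  have hinner (x : G) : ∫⁻ y, g (x - y) * (K.indicator 1 x + K.indicator 1 y) ∂μ =
      (∫⁻ z, g z ∂μ) * K.indicator 1 x + ∫⁻ y, g (x - y) * K.indicator 1 y ∂μ := by
    simp_rw [mul_add]
    rw [lintegral_add_left (by fun_prop), lintegral_mul_const _ (by fun_prop),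
      lintegral_sub_left_eq_self]
  have hswap : ∫⁻ x, ∫⁻ y, g (x - y) * K.indicator 1 y ∂μ ∂μ = (∫⁻ z, g z ∂μ) * μ K := by
    rw [lintegral_lintegral_swap (by fun_prop)]
    have hcol (y : G) :
        ∫⁻ x, g (x - y) * K.indicator 1 y ∂μ = (∫⁻ z, g z ∂μ) * K.indicator 1 y := by
      rw [lintegral_mul_const _ (by fun_prop), lintegral_sub_right_eq_self]
    rw [lintegral_congr hcol, lintegral_const_mul _ hind, lintegral_indicator_one hK]
  rw [lintegral_congr hinner, lintegral_add_left (by fun_prop), hswap, lintegral_const_mul _ hind,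
    lintegral_indicator_one hK]
  ring

theorem integral_le_toReal_lintegral_ofReal {α : Type*} [MeasurableSpace α] {μ : Measure α}
    {f : α → ℝ} (hf : 0 ≤ f) : ∫ x, f x ∂μ ≤ (∫⁻ x, ENNReal.ofReal (f x) ∂μ).toReal := by
  by_cases hm : AEStronglyMeasurable f μ
  · exact (integral_eq_lintegral_of_nonneg_ae (.of_forall hf) hm).le
  · rw [integral_undef fun h => hm h.1]
    exact ENNReal.toReal_nonneg

theorem integral_integral_le_toReal_lintegral_lintegral {α β : Type*} [MeasurableSpace α]
    [MeasurableSpace β] {μ : Measure α} {ν : Measure β} {F : α → β → ℝ} (hF : ∀ x, 0 ≤ F x)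
    (hfin : ∫⁻ x, ∫⁻ y, ENNReal.ofReal (F x y) ∂ν ∂μ ≠ ∞) :
    ∫ x, ∫ y, F x y ∂ν ∂μ ≤ (∫⁻ x, ∫⁻ y, ENNReal.ofReal (F x y) ∂ν ∂μ).toReal := by
  refine (integral_le_toReal_lintegral_ofReal fun x => integral_nonneg (hF x)).trans ?_
  refine ENNReal.toReal_mono hfin (lintegral_mono fun x => ?_)
  exact (ENNReal.ofReal_le_ofReal (integral_le_toReal_lintegral_ofReal (hF x))).trans
    ENNReal.ofReal_toReal_le

theorem LipschitzWith.ofReal_abs_sub_rpow_le {α : Type*} [PseudoMetricSpace α] {f : α → ℝ}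
    {L : NNReal} (hf : LipschitzWith L f) {K : Set α} (hf0 : ∀ x ∉ K, f x = 0) {p : ℝ}
    (hp : 0 < p) (x y : α) :
    ENNReal.ofReal (|f x - f y| ^ p) ≤
      ENNReal.ofReal ((L * dist x y) ^ p) * (K.indicator 1 x + K.indicator 1 y) := by
  by_cases hxy : x ∈ K ∨ y ∈ K
  · have hone : (1 : ℝ≥0∞) ≤ K.indicator 1 x + K.indicator 1 y := by
      rcases hxy with hx | hy
      · exact le_add_right (by simp [hx])
      · exact le_add_left (by simp [hy])
    calc ENNReal.ofReal (|f x - f y| ^ p) ≤ ENNReal.ofReal ((L * dist x y) ^ p) := by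
          gcongr
          exact hf.dist_le_mul x y
      _ ≤ _ := le_mul_of_one_le_right' hone
  · push Not at hxy
    simp [hf0 x hxy.1, hf0 y hxy.2, zero_rpow hp.ne']

lemma four_mul_rpow_half {t : ℝ} (ht : 0 ≤ t) (p : ℝ) :
    (4 * t) ^ (p / 2) = 2 ^ p * t ^ (p / 2) := by
  rw [mul_rpow (by norm_num) ht, show (4 : ℝ) = 2 ^ (2 : ℝ) by norm_num, ← rpow_mul (by norm_num)]
  ring_nf

lemma heatKernel_sub_zero (n : ℕ) (t : ℝ) (x y : EuclideanSpace ℝ (Fin n)) :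
    heatKernel n t x y = heatKernel n t (x - y) 0 := by
  simp [heatKernel]

lemma heatKernel_nonneg {n : ℕ} {t : ℝ} (ht : 0 ≤ t) (x y : EuclideanSpace ℝ (Fin n)) :
    0 ≤ heatKernel n t x y := by
  unfold heatKernel; positivity

lemma heatKernel_zero_right (n : ℕ) (t : ℝ) (z : EuclideanSpace ℝ (Fin n)) :
    heatKernel n t z 0 = (4 * π * t) ^ (-(n : ℝ) / 2) * exp (-(4 * t)⁻¹ * ‖z‖ ^ 2) := by
  simp [heatKernel, div_eq_inv_mul]

section HeatKernelMoment

variable {n : ℕ} {t q : ℝ}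

lemma integrable_heatKernel_mul_norm_rpow (hn : 1 ≤ n) (ht : 0 < t) (hq : -(n : ℝ) < q) :
    Integrable fun z : EuclideanSpace ℝ (Fin n) => heatKernel n t z 0 * ‖z‖ ^ q := by
  have : NeZero n := ⟨by omega⟩
  refine ((integrable_norm_rpow_mul_exp_neg_mul_sq (E := EuclideanSpace ℝ (Fin n))
    (inv_pos.2 (by positivity : (0 : ℝ) < 4 * t)) (by simpa using hq)).const_mul
    ((4 * π * t) ^ (-(n : ℝ) / 2))).congr (.of_forall fun z => ?_)
  simp only [heatKernel_zero_right]
  ring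

lemma integral_heatKernel_mul_norm_rpow (hn : 1 ≤ n) (ht : 0 < t) (hq : -(n : ℝ) < q) :
    ∫ z : EuclideanSpace ℝ (Fin n), heatKernel n t z 0 * ‖z‖ ^ q =
      (4 * t) ^ (q / 2) * Gamma ((n + q) / 2) / Gamma (n / 2) := by
  have : NeZero n := ⟨by omega⟩
  have h4t : 0 < 4 * t := by positivity
  have hconst : (4 * π * t) ^ (-(n : ℝ) / 2) * π ^ ((n : ℝ) / 2) * (4 * t)⁻¹ ^ (-(n + q) / 2) =
      (4 * t) ^ (q / 2) := by
    rw [show 4 * π * t = π * (4 * t) by ring, mul_rpow pi_pos.le h4t.le, inv_rpow h4t.le,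
      ← rpow_neg h4t.le]
    calc π ^ (-(n : ℝ) / 2) * (4 * t) ^ (-(n : ℝ) / 2) * π ^ ((n : ℝ) / 2) *
          (4 * t) ^ (-(-(n + q) / 2))
        = π ^ (-(n : ℝ) / 2 + n / 2) * (4 * t) ^ (-(n : ℝ) / 2 + -(-(n + q) / 2)) := by
          rw [rpow_add pi_pos, rpow_add h4t]; ring
      _ = (4 * t) ^ (q / 2) := by ring_nf; rw [rpow_zero, one_mul]
  simp_rw [heatKernel_zero_right, mul_assoc, integral_const_mul, mul_comm (exp _)]
  rw [integral_norm_rpow_mul_exp_neg_mul_sq (inv_pos.2 h4t) (by simpa using hq),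
    finrank_euclideanSpace_fin, ← hconst, mul_assoc 4 π t]
  ring

lemma lintegral_heatKernel_mul_norm_rpow (hn : 1 ≤ n) (ht : 0 < t) (hq : -(n : ℝ) < q) :
    ∫⁻ z : EuclideanSpace ℝ (Fin n), ENNReal.ofReal (heatKernel n t z 0 * ‖z‖ ^ q) =
      ENNReal.ofReal ((4 * t) ^ (q / 2) * Gamma ((n + q) / 2) / Gamma (n / 2)) := by
  rw [← integral_heatKernel_mul_norm_rpow hn ht hq, ofReal_integral_eq_lintegral_ofReal
    (integrable_heatKernel_mul_norm_rpow hn ht hq)]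
  exact .of_forall fun z => mul_nonneg (heatKernel_nonneg ht.le z 0) (by positivity)

end HeatKernelMoment

section LipschitzEnergy

variable {n : ℕ} {t p L : ℝ} {K : Set (EuclideanSpace ℝ (Fin n))}
  {f : EuclideanSpace ℝ (Fin n) → ℝ}

lemma ofReal_heatKernel_mul_abs_sub_rpow_le (ht : 0 ≤ t) (hp : 0 < p) (hL : 0 ≤ L)
    (hf : LipschitzWith L.toNNReal f) (hf0 : ∀ x ∉ K, f x = 0) (x y : EuclideanSpace ℝ (Fin n)) :
    ENNReal.ofReal (heatKernel n t x y * |f x - f y| ^ p) ≤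
      ENNReal.ofReal (L ^ p) * ENNReal.ofReal (heatKernel n t (x - y) 0 * ‖x - y‖ ^ p) *
        (K.indicator 1 x + K.indicator 1 y) := by
  rw [ENNReal.ofReal_mul (heatKernel_nonneg ht x y)]
  refine (mul_le_mul' le_rfl (hf.ofReal_abs_sub_rpow_le hf0 hp x y)).trans_eq ?_
  rw [Real.coe_toNNReal L hL, dist_eq_norm, mul_rpow hL (norm_nonneg _), heatKernel_sub_zero,
    ENNReal.ofReal_mul (by positivity), ENNReal.ofReal_mul (heatKernel_nonneg ht _ _)]
  ring

lemma lintegral_lintegral_heatKernel_mul_abs_sub_rpow_le (hn : 1 ≤ n) (ht : 0 < t) (hp : 0 < p)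
    (hL : 0 ≤ L) (hK : MeasurableSet K) (hKfin : volume K < ⊤) (hf : LipschitzWith L.toNNReal f)
    (hf0 : ∀ x ∉ K, f x = 0) :
    ∫⁻ x, ∫⁻ y, ENNReal.ofReal (heatKernel n t x y * |f x - f y| ^ p) ≤
      ENNReal.ofReal (2 * (volume K).toReal *
        (L ^ p * ((4 * t) ^ (p / 2) * Gamma ((n + p) / 2) / Gamma (n / 2)))) := by
  have hg : Measurable fun z : EuclideanSpace ℝ (Fin n) =>
      ENNReal.ofReal (L ^ p) * ENNReal.ofReal (heatKernel n t z 0 * ‖z‖ ^ p) := by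
    unfold heatKernel; fun_prop
  calc _ ≤ ∫⁻ x, ∫⁻ y, ENNReal.ofReal (L ^ p) *
        ENNReal.ofReal (heatKernel n t (x - y) 0 * ‖x - y‖ ^ p) *
          (K.indicator 1 x + K.indicator 1 y) := lintegral_mono fun x => lintegral_mono fun y =>
        ofReal_heatKernel_mul_abs_sub_rpow_le ht.le hp hL hf hf0 x y
    _ = 2 * volume K * ∫⁻ z, ENNReal.ofReal (L ^ p) *
        ENNReal.ofReal (heatKernel n t z 0 * ‖z‖ ^ p) :=
      lintegral_lintegral_sub_mul_indicator_add_indicator _ hg hK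
    _ = _ := by
      rw [lintegral_const_mul _ (by unfold heatKernel; fun_prop),
        lintegral_heatKernel_mul_norm_rpow hn ht (by linarith),
        ENNReal.ofReal_mul (by positivity : (0 : ℝ) ≤ 2 * (volume K).toReal),
        ENNReal.ofReal_mul zero_le_two, ENNReal.ofReal_ofNat, ENNReal.ofReal_toReal hKfin.ne,
        ENNReal.ofReal_mul (by positivity : 0 ≤ L ^ p)]

end LipschitzEnergy

/-- Uniform bound on the rescaled heat-kernel `p`-energy of a compactly vanishing
Lipschitz function. -/
theorem stmt_17 (n : ℕ) (hn : 1 ≤ n) (p : ℝ) (hp : 1 < p) (L : ℝ) (hL : 0 ≤ L)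
    (K : Set (EuclideanSpace ℝ (Fin n))) (hK : MeasurableSet K) (hKfin : volume K < ⊤)
    (f : EuclideanSpace ℝ (Fin n) → ℝ) (hf : LipschitzWith L.toNNReal f)
    (hf0 : ∀ x ∉ K, f x = 0) :
    ∀ t > (0 : ℝ),
      t ^ (-(p / 2)) * ∫ x, ∫ y, heatKernel n t x y * |f x - f y| ^ p
        ≤ 2 ^ (p + 1) * L ^ p * (volume K).toReal *
            Real.Gamma (((n : ℝ) + p) / 2) / Real.Gamma ((n : ℝ) / 2) := by
  intro t ht
  have hp0 : 0 < p := by linarith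
  have hbound := lintegral_lintegral_heatKernel_mul_abs_sub_rpow_le hn ht hp0 hL hK hKfin hf hf0
  calc t ^ (-(p / 2)) * ∫ x, ∫ y, heatKernel n t x y * |f x - f y| ^ p
      ≤ t ^ (-(p / 2)) * (2 * (volume K).toReal *
          (L ^ p * ((4 * t) ^ (p / 2) * Gamma ((n + p) / 2) / Gamma (n / 2)))) := by
        gcongr
        refine (integral_integral_le_toReal_lintegral_lintegral (fun x y => ?_)
          (ne_top_of_le_ne_top ENNReal.ofReal_ne_top hbound)).trans
          (ENNReal.toReal_le_of_le_ofReal (by positivity) hbound)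
        exact mul_nonneg (heatKernel_nonneg ht.le x y) (by positivity)
    _ = _ := by
        rw [four_mul_rpow_half ht.le, rpow_add_one two_ne_zero, rpow_neg ht.le]
        field_simp
end
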